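/- arXiv:cs/0612067 — 5 statements merged into one kernel-verified Lean document; each statement's English description precedes it below -/
import Mathlib

section
/- D_j = 0 for every j with k ≤ j ≤ n−1. That is, the last n−k components of the inverse GFFT of ḡ (equivalently, the last n−k diagonal entries of D) all vanish. -/
/-!
Since `α^(-ij) = (α^(-j))^i`, the `j`-th entry of the inverse GFFT of `ḡ` is the evaluation
`g(α^(b-1-j))`. As `α^n = 1`, this point equals `α^(b + (n-1-j))`, and for `k ≤ j < n` the
exponent offset `n-1-j` lies in `[0, n-k)`, so it is one of the roots of `g`.
-/

open Polynomial Finset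

namespace Polynomial

variable {R : Type*} [CommRing R]

lemma eval_finsetProd_X_sub_C_of_mem {ι : Type*} {s : Finset ι} (f : ι → R) {i : ι}
    (hi : i ∈ s) : (∏ t ∈ s, (X - C (f t))).eval (f i) = 0 := by
  rw [eval_prod]
  exact prod_eq_zero hi (by simp)

lemma sum_fin_coeff_mul_pow_eq_eval {n : ℕ} {p : R[X]} (hp : p.natDegree < n) (x : R) :
    ∑ i : Fin n, p.coeff i * x ^ (i : ℕ) = p.eval x := by
  rw [eval_eq_sum_range' hp, Fin.sum_univ_eq_sum_range (fun i => p.coeff i * x ^ i)]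

lemma sum_fin_coeff_mul_zpow_mul_zpow_eq_eval {F : Type*} [Field F] {n : ℕ} {p : F[X]}
    (hp : p.natDegree < n) {α : F} (hα : α ≠ 0) (c : ℤ) (j : ℕ) :
    ∑ i : Fin n, p.coeff i * α ^ (c * ((i : ℕ) : ℤ)) * α ^ (-(((i : ℕ) : ℤ) * (j : ℤ))) =
      p.eval (α ^ (c - j)) := by
  rw [← sum_fin_coeff_mul_pow_eq_eval hp]
  refine sum_congr rfl fun i _ => ?_
  rw [mul_assoc, ← zpow_add₀ hα, ← zpow_natCast, ← zpow_mul]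
  ring_nf

end Polynomial

theorem stmt_5_general (F : Type*) [Field F] (n k : ℕ) (b : ℤ)
    (hk : 1 ≤ k)
    (α : F) (hα : IsPrimitiveRoot α n) :
    let g : Polynomial F :=
      ∏ t ∈ Finset.range (n - k), (Polynomial.X - Polynomial.C (α ^ (b + (t : ℤ))))
    let gb : Fin n → F := fun i => g.coeff i * α ^ ((b - 1) * ((i : ℕ) : ℤ))
    let D : Fin n → F :=
      fun j => ∑ i : Fin n, gb i * α ^ (-(((i : ℕ) : ℤ) * ((j : ℕ) : ℤ)))
    ∀ j : Fin n, k ≤ (j : ℕ) → D j = 0 := by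
  intro g gb D j hj
  have hjn := j.isLt
  have hα0 : α ≠ 0 := hα.ne_zero (by omega)
  have hdeg : g.natDegree < n := by
    simp only [g, natDegree_finsetProd_X_sub_C_eq_card, card_range]
    omega
  have hpoint : α ^ (b - 1 - (j : ℕ)) = α ^ (b + ((n - 1 - j : ℕ) : ℤ)) := by
    rw [show b - 1 - (j : ℕ) = b + ((n - 1 - j : ℕ) : ℤ) - n by omega, zpow_sub₀ hα0,
      hα.zpow_eq_one, div_one]
  change ∑ i : Fin n, _ = 0
  rw [sum_fin_coeff_mul_zpow_mul_zpow_eq_eval hdeg hα0, hpoint]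
  exact eval_finsetProd_X_sub_C_of_mem (fun t : ℕ => α ^ (b + (t : ℤ))) (mem_range.2 (by omega))

/-- The last `n-k` components of the inverse GFFT of `ḡ` (the last `n-k`
diagonal entries of `D`) all vanish. -/
theorem stmt_5 (F : Type*) [Field F] (n k : ℕ) (b : ℤ)
    (hn : 1 ≤ n) (hk : 1 ≤ k) (hkn : k < n)
    (α : F) (hα : IsPrimitiveRoot α n) :
    let g : Polynomial F :=
      ∏ t ∈ Finset.range (n - k), (Polynomial.X - Polynomial.C (α ^ (b + (t : ℤ))))
    let gb : Fin n → F := fun i => g.coeff i * α ^ ((b - 1) * ((i : ℕ) : ℤ))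
    let D : Fin n → F :=
      fun j => ∑ i : Fin n, gb i * α ^ (-(((i : ℕ) : ℤ) * ((j : ℕ) : ℤ)))
    ∀ j : Fin n, k ≤ (j : ℕ) → D j = 0 :=
  stmt_5_general F n k b hk α hα
end

section
/- D_j ≠ 0 for every j with 0 ≤ j ≤ k−1. Consequently the upper-left k×k submatrix D_{k×k} = diag(D_0, D_1, …, D_{k−1}) of D is an invertible matrix over F. -/
/-- `D_j ≠ 0` for `0 ≤ j ≤ k-1`; consequently the upper-left `k×k` submatrix
`D_{k×k} = diag(D_0,…,D_{k-1})` of `D` is invertible over `F`. -/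
theorem stmt_6 (F : Type*) [Field F] (n k : ℕ) (b : ℤ)
    (hn : 1 ≤ n) (hk : 1 ≤ k) (hkn : k < n)
    (α : F) (hα : IsPrimitiveRoot α n) :
    let g : Polynomial F :=
      ∏ t ∈ Finset.range (n - k), (Polynomial.X - Polynomial.C (α ^ (b + (t : ℤ))))
    let gb : Fin n → F := fun i => g.coeff i * α ^ ((b - 1) * ((i : ℕ) : ℤ))
    let D : Fin n → F :=
      fun j => ∑ i : Fin n, gb i * α ^ (-(((i : ℕ) : ℤ) * ((j : ℕ) : ℤ)))
    (∀ j : Fin n, (j : ℕ) < k → D j ≠ 0) ∧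
      IsUnit (Matrix.diagonal fun j : Fin k => D (Fin.castLE hkn.le j)) := by
  intro g gb D
  have hα0 : α ≠ 0 := hα.ne_zero (by omega)
  have hdeg : g.natDegree < n := by
    have h1 : g.natDegree ≤ ∑ t ∈ Finset.range (n - k),
        (Polynomial.X - Polynomial.C (α ^ (b + (t : ℤ)))).natDegree :=
      Polynomial.natDegree_prod_le _ _
    simp only [Polynomial.natDegree_X_sub_C, Finset.sum_const, Finset.card_range,
      smul_eq_mul, mul_one] at h1
    omega
  have key : ∀ j : Fin n, (j : ℕ) < k → D j ≠ 0 := by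
    intro j hj
    have hD : D j = g.eval (α ^ (b - 1 - ((j : ℕ) : ℤ))) := by
      show (∑ i : Fin n, gb i * α ^ (-(((i : ℕ) : ℤ) * ((j : ℕ) : ℤ)))) = _
      rw [Polynomial.eval_eq_sum_range' hdeg, ← Fin.sum_univ_eq_sum_range]
      refine Finset.sum_congr rfl fun i _ => ?_
      show g.coeff i * α ^ ((b - 1) * ((i : ℕ) : ℤ)) *
          α ^ (-(((i : ℕ) : ℤ) * ((j : ℕ) : ℤ)))
        = g.coeff i * (α ^ (b - 1 - ((j : ℕ) : ℤ))) ^ (i : ℕ)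
      rw [mul_assoc, ← zpow_add₀ hα0, ← zpow_natCast (α ^ (b - 1 - ((j : ℕ) : ℤ))),
        ← zpow_mul]
      congr 1
      ring_nf
    rw [hD]
    show Polynomial.eval _ (∏ t ∈ Finset.range (n - k),
        (Polynomial.X - Polynomial.C (α ^ (b + (t : ℤ))))) ≠ 0
    rw [Polynomial.eval_prod]
    refine Finset.prod_ne_zero_iff.mpr fun t ht => ?_
    simp only [Polynomial.eval_sub, Polynomial.eval_X, Polynomial.eval_C]
    rw [sub_ne_zero]
    intro heq
    have h1 : α ^ ((b - 1 - ((j : ℕ) : ℤ)) - (b + (t : ℤ))) = 1 := by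
      rw [zpow_sub₀ hα0, heq, div_self (zpow_ne_zero _ hα0)]
    have h2 : (n : ℤ) ∣ ((b - 1 - ((j : ℕ) : ℤ)) - (b + (t : ℤ))) :=
      hα.zpow_eq_one_iff_dvd _ |>.mp h1
    have h3 : (b - 1 - ((j : ℕ) : ℤ)) - (b + (t : ℤ)) = -(1 + (j : ℕ) + (t : ℤ)) := by ring
    rw [h3, Int.dvd_neg] at h2
    have ht' : t < n - k := Finset.mem_range.mp ht
    have := Int.le_of_dvd (by positivity) h2
    omega
  refine ⟨key, ?_⟩
  rw [Matrix.isUnit_iff_isUnit_det, Matrix.det_diagonal]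
  rw [isUnit_iff_ne_zero]
  exact Finset.prod_ne_zero_iff.mpr fun j _ =>
    key (Fin.castLE hkn.le j) (by simpa using j.isLt)
end

section
/- Suppose m ∈ F^k, c = m·G_a, c̄ = c·W, and f ∈ F^n satisfies f_j = 0 for all k ≤ j ≤ n−1 and f·𝐅 = c̄. Then f = m·Ã·W·𝐅⁻·D, where Ã = (A | 0) is the k×n matrix obtained by appending n−k all-zero columns to A. Equivalently, transposing, f^T = D·𝐅⁻·W·Ã^T·m^T (using that 𝐅, 𝐅⁻, D and W are symmetric). -/
/-!
Since `𝐅 𝐅⁻ = n I = I`, the hypothesis `f 𝐅 = m A G W` gives `f = m A G W 𝐅⁻`. The column `j` of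
`W 𝐅⁻` is the Vandermonde vector `(β_j ^ t)_t` with `β_j = α ^ (b - 1 - j)`, an `n`-th root of
unity, hence a common eigenvector of the transposed circulant matrix of `g`, with eigenvalue
`∑ g_u β_j ^ u = D_j`. The rows of `G` are the first `k` rows of that circulant, so `G W 𝐅⁻` is
the first `k` rows of `W 𝐅⁻ D`, which is what right multiplication by `Ã = (A | 0)` selects.
-/

open Matrix Finset

lemma zpow_mul_zpow_neg_mul {G₀ : Type*} [GroupWithZero G₀] {α : G₀} (hα : α ≠ 0) (a j : ℤ)
    (t : ℕ) : α ^ (a * t) * α ^ (-(t * j)) = (α ^ (a - j)) ^ t := by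
  rw [← zpow_add₀ hα, ← zpow_natCast, ← _root_.zpow_mul]
  congr 1
  ring

lemma geom_sum_eq_zero_of_pow_eq_one {F : Type*} [DivisionRing F] {x : F} {n : ℕ} (hx : x ≠ 1)
    (hxn : x ^ n = 1) : ∑ i ∈ range n, x ^ i = 0 := by
  rw [geom_sum_eq hx, hxn, sub_self, zero_div]

theorem IsPrimitiveRoot.dft_mul_idft {F : Type*} [Field F] {α : F} {n : ℕ}
    (hα : IsPrimitiveRoot α n) :
    (of fun i j : Fin n => α ^ ((i : ℕ) * (j : ℕ))) *
        (of fun i j : Fin n => α ^ (-(((i : ℕ) : ℤ) * ((j : ℕ) : ℤ)))) = (n : F) • 1 := by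
  ext i j
  have hα0 : α ≠ 0 := hα.ne_zero i.pos.ne'
  set ζ := α ^ (((i : ℕ) : ℤ) - ((j : ℕ) : ℤ)) with hζ_def
  have hentry : ∀ t : Fin n,
      α ^ ((i : ℕ) * (t : ℕ)) * α ^ (-(((t : ℕ) : ℤ) * ((j : ℕ) : ℤ))) = ζ ^ (t : ℕ) := by
    intro t
    rw [← zpow_mul_zpow_neg_mul hα0, ← zpow_natCast]
    push_cast
    rfl
  simp only [Matrix.mul_apply, of_apply, hentry, Matrix.smul_apply, one_apply, smul_eq_mul,
    mul_ite, mul_one, mul_zero]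
  rw [Fin.sum_univ_eq_sum_range (fun t => ζ ^ t)]
  split_ifs with hij
  · simp [ζ, hij]
  · have hζ : ζ ≠ 1 := by
      intro h
      rw [hζ_def, zpow_sub₀ hα0, div_eq_one_iff_eq (zpow_ne_zero _ hα0), zpow_natCast,
        zpow_natCast] at h
      exact hij (Fin.ext (hα.pow_inj i.isLt j.isLt h))
    refine geom_sum_eq_zero_of_pow_eq_one hζ ?_
    rw [← zpow_natCast, ← _root_.zpow_mul, mul_comm, _root_.zpow_mul, zpow_natCast,
      hα.pow_eq_one, _root_.one_zpow]

theorem Matrix.vandermonde_mul_circulant {R : Type*} [CommRing R] {n : ℕ} [NeZero n]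
    (β c : Fin n → R) (hβ : ∀ j, β j ^ n = 1) :
    vandermonde β * circulant c =
      diagonal (fun j => ∑ u, c u * β j ^ (u : ℕ)) * vandermonde β := by
  ext j s
  rw [Matrix.mul_apply, diagonal_mul, vandermonde_apply, sum_mul]
  refine Fintype.sum_equiv (Equiv.subRight s) _ _ fun t => ?_
  have hpow : β j ^ (t : ℕ) = β j ^ ((t - s : Fin n) : ℕ) * β j ^ (s : ℕ) := by
    rw [← pow_add, pow_eq_pow_mod (((t - s : Fin n) : ℕ) + s) (hβ j), ← Fin.val_add,
      sub_add_cancel]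
  simp only [vandermonde_apply, circulant_apply, Equiv.subRight_apply, hpow]
  ring

def Matrix.zeroPadCols {m R : Type*} [Zero R] {k n : ℕ} (A : Matrix m (Fin k) R) :
    Matrix m (Fin n) R :=
  of fun i j => if h : (j : ℕ) < k then A i ⟨j, h⟩ else 0

theorem Matrix.zeroPadCols_mul {m o R : Type*} [Semiring R] {k n : ℕ} (h : k ≤ n)
    (A : Matrix m (Fin k) R) (M : Matrix (Fin n) o R) :
    (zeroPadCols A : Matrix m (Fin n) R) * M = A * M.submatrix (Fin.castLE h) id := by
  ext i l
  rw [Matrix.mul_apply, Matrix.mul_apply]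
  simp only [zeroPadCols, Matrix.of_apply, Matrix.submatrix_apply, id_eq]
  symm
  refine Fintype.sum_of_injective (Fin.castLE h) (Fin.castLE_injective h) _ _ ?_ fun s => ?_
  · rintro j hj
    rw [dif_neg, zero_mul]
    exact fun hjk => hj ⟨⟨j, hjk⟩, rfl⟩
  · simp

theorem stmt_9_general (F : Type*) [Field F] (n k : ℕ) (b : ℤ)
    (hkn : k < n)
    (α : F) (hα : IsPrimitiveRoot α n)
    (hchar : (n : F) = 1)
    (A : Matrix (Fin k) (Fin k) F)
    (m : Fin k → F) (f : Fin n → F) :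
    let g : Polynomial F :=
      ∏ t ∈ Finset.range (n - k), (Polynomial.X - Polynomial.C (α ^ (b + (t : ℤ))))
    let gb : Fin n → F := fun i => g.coeff i * α ^ ((b - 1) * ((i : ℕ) : ℤ))
    let G : Matrix (Fin k) (Fin n) F :=
      Matrix.of fun i t => g.coeff ((t - Fin.castLE hkn.le i : Fin n) : ℕ)
    let Ga : Matrix (Fin k) (Fin n) F := A * G
    let W : Matrix (Fin n) (Fin n) F :=
      Matrix.diagonal fun i : Fin n => α ^ ((b - 1) * ((i : ℕ) : ℤ))
    let Fmat : Matrix (Fin n) (Fin n) F :=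
      Matrix.of fun i j : Fin n => α ^ ((i : ℕ) * (j : ℕ))
    let Finv : Matrix (Fin n) (Fin n) F :=
      Matrix.of fun i j : Fin n => α ^ (-(((i : ℕ) : ℤ) * ((j : ℕ) : ℤ)))
    let D : Matrix (Fin n) (Fin n) F :=
      Matrix.diagonal fun j : Fin n => ∑ i : Fin n, gb i * α ^ (-(((i : ℕ) : ℤ) * ((j : ℕ) : ℤ)))
    let Atil : Matrix (Fin k) (Fin n) F :=
      Matrix.of fun i j => if h : (j : ℕ) < k then A i ⟨(j : ℕ), h⟩ else 0
    (∀ j : Fin n, k ≤ (j : ℕ) → f j = 0) →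
    Matrix.vecMul f Fmat = Matrix.vecMul (Matrix.vecMul m Ga) W →
    f = Matrix.vecMul m (Atil * W * Finv * D) := by
  intro g gb G Ga W Fmat Finv D Atil _ hfF
  have : NeZero n := ⟨by omega⟩
  have hα0 : α ≠ 0 := hα.ne_zero (NeZero.ne n)
  set β : Fin n → F := fun j => α ^ ((b - 1) - ((j : ℕ) : ℤ))
  have hβ : ∀ j, β j ^ n = 1 := fun j => by
    rw [← zpow_natCast, ← _root_.zpow_mul, mul_comm, _root_.zpow_mul, zpow_natCast,
      hα.pow_eq_one, _root_.one_zpow]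
  have hFFinv : Fmat * Finv = 1 := by
    rw [hα.dft_mul_idft, hchar, one_smul]
  have hWFinv : W * Finv = (vandermonde β)ᵀ := by
    ext t j
    exact (diagonal_mul _ _ _ _).trans (zpow_mul_zpow_neg_mul hα0 _ _ _)
  have hD : D = diagonal fun j => ∑ u : Fin n, g.coeff u * β j ^ (u : ℕ) := by
    refine congrArg diagonal (funext fun j => Finset.sum_congr rfl fun u _ => ?_)
    rw [mul_assoc, zpow_mul_zpow_neg_mul hα0]
  have hG : G = (circulant fun u : Fin n => g.coeff u)ᵀ.submatrix (Fin.castLE hkn.le) id := rfl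
  have hGV : G * (W * Finv) = (W * Finv * D).submatrix (Fin.castLE hkn.le) id := by
    rw [hG, hWFinv, hD, ← submatrix_id_id (vandermonde β)ᵀ,
      ← submatrix_mul _ _ _ _ _ Function.bijective_id, submatrix_id_id, ← transpose_mul,
      vandermonde_mul_circulant _ _ hβ, transpose_mul, diagonal_transpose]
  calc f = f ᵥ* (Fmat * Finv) := by rw [hFFinv, vecMul_one]
    _ = m ᵥ* (A * (G * (W * Finv))) := by
      rw [← vecMul_vecMul, hfF, vecMul_vecMul, vecMul_vecMul]
      simp only [Ga, Matrix.mul_assoc]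
    _ = m ᵥ* (Atil * W * Finv * D) := by
      rw [hGV, ← zeroPadCols_mul hkn.le]
      simp only [Matrix.mul_assoc]
      rfl

/-- If `m` is encoded as `c = m·G_a`, `c̄ = c·W`, and `f` (with last `n-k`
components zero) satisfies `f·𝐅 = c̄`, then `f = m·Ã·W·𝐅⁻·D`. -/
theorem stmt_9 (F : Type*) [Field F] (n k : ℕ) (b : ℤ)
    (hn : 1 ≤ n) (hk : 1 ≤ k) (hkn : k < n)
    (α : F) (hα : IsPrimitiveRoot α n)
    (hchar : (n : F) = 1)
    (A : Matrix (Fin k) (Fin k) F) (hA : IsUnit A)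
    (m : Fin k → F) (f : Fin n → F) :
    let g : Polynomial F :=
      ∏ t ∈ Finset.range (n - k), (Polynomial.X - Polynomial.C (α ^ (b + (t : ℤ))))
    let gb : Fin n → F := fun i => g.coeff i * α ^ ((b - 1) * ((i : ℕ) : ℤ))
    let G : Matrix (Fin k) (Fin n) F :=
      Matrix.of fun i t => g.coeff ((t - Fin.castLE hkn.le i : Fin n) : ℕ)
    let Ga : Matrix (Fin k) (Fin n) F := A * G
    let W : Matrix (Fin n) (Fin n) F :=
      Matrix.diagonal fun i : Fin n => α ^ ((b - 1) * ((i : ℕ) : ℤ))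
    let Fmat : Matrix (Fin n) (Fin n) F :=
      Matrix.of fun i j : Fin n => α ^ ((i : ℕ) * (j : ℕ))
    let Finv : Matrix (Fin n) (Fin n) F :=
      Matrix.of fun i j : Fin n => α ^ (-(((i : ℕ) : ℤ) * ((j : ℕ) : ℤ)))
    let D : Matrix (Fin n) (Fin n) F :=
      Matrix.diagonal fun j : Fin n => ∑ i : Fin n, gb i * α ^ (-(((i : ℕ) : ℤ) * ((j : ℕ) : ℤ)))
    let Atil : Matrix (Fin k) (Fin n) F :=
      Matrix.of fun i j => if h : (j : ℕ) < k then A i ⟨(j : ℕ), h⟩ else 0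
    (∀ j : Fin n, k ≤ (j : ℕ) → f j = 0) →
    Matrix.vecMul f Fmat = Matrix.vecMul (Matrix.vecMul m Ga) W →
    f = Matrix.vecMul m (Atil * W * Finv * D) :=
  stmt_9_general F n k b hkn α hα hchar A m f
end

section
/- Suppose m ∈ F^k, c = m·G_a, c̄ = c·W, and f ∈ F^n satisfies f_j = 0 for all k ≤ j ≤ n−1 and f·𝐅 = c̄. Then the reduced k-dimensional system (f_0, f_1, …, f_{k−1})^T = D_{k×k} · 𝐅⁻_{k×k} · W_{k×k} · A^T · m^T holds, where M_{k×k} denotes the upper-left k×k submatrix of an n×n matrix M. -/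
/-!
Since `𝐅 𝐅⁻ = n • 1 = 1`, the hypothesis gives `f = c W 𝐅⁻`, so
`f_p = ∑ₜ c_t α^((b-1-p)t)` is the evaluation of `c(x)` at `α^(b-1-p)`. The rows of `G` are the
cyclic shifts `x^q g(x) mod (x^n - 1)`, and as `α^n = 1` evaluation at a power of `α` turns a
cyclic shift by `q` into multiplication by the `q`-th power. Hence
`f_p = (∑ₛ g_s α^((b-1-p)s)) · ∑_q (mA)_q α^((b-1-p)q)`, which is `D_p` times the `p`-th entry
of `𝐅⁻ W Aᵀ mᵀ`.
-/

open Finset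

namespace IsPrimitiveRoot

variable {F : Type*} [Field F] {n : ℕ} {α : F}

theorem zpow_eq_zpow_of_modEq (hα : IsPrimitiveRoot α n) {x y : ℤ} (h : x ≡ y [ZMOD n]) :
    α ^ x = α ^ y := by
  obtain rfl | hn := eq_or_ne n 0
  · rw [Nat.cast_zero, Int.modEq_zero_iff] at h
    rw [h]
  obtain ⟨c, hc⟩ := Int.modEq_iff_dvd.mp h.symm
  rw [show x = y + n * c by omega, zpow_add₀ (hα.ne_zero hn), zpow_mul, hα.zpow_eq_one,
    one_zpow, mul_one]

theorem zpow_mul_val_add (hα : IsPrimitiveRoot α n) (e : ℤ) (s t : Fin n) :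
    α ^ (e * ((s + t : Fin n) : ℕ)) = α ^ (e * (s : ℕ)) * α ^ (e * (t : ℕ)) := by
  rw [← zpow_add₀ (hα.ne_zero (Fin.pos s).ne'), ← mul_add]
  refine hα.zpow_eq_zpow_of_modEq (Int.ModEq.mul_left _ ?_)
  rw [Fin.val_add]
  push_cast
  exact Int.mod_modEq _ _

theorem sum_sub_mul_zpow (hα : IsPrimitiveRoot α n) (h : Fin n → F) (e : ℤ) (q : Fin n) :
    ∑ t, h (t - q) * α ^ (e * (t : ℕ)) = α ^ (e * (q : ℕ)) * ∑ s, h s * α ^ (e * (s : ℕ)) := by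
  have : NeZero n := ⟨(Fin.pos q).ne'⟩
  rw [← Equiv.sum_comp (Equiv.addRight q), mul_sum]
  refine sum_congr rfl fun s _ => ?_
  rw [Equiv.coe_addRight, add_sub_cancel_right, hα.zpow_mul_val_add]
  ring

theorem dft_mul_idft_s10 (hα : IsPrimitiveRoot α n) :
    (Matrix.of fun i j : Fin n => α ^ ((i : ℕ) * (j : ℕ))) *
      (Matrix.of fun i j : Fin n => α ^ (-(((i : ℕ) : ℤ) * ((j : ℕ) : ℤ)))) = (n : F) • 1 := by
  ext i j
  have hterm (t : Fin n) : α ^ ((i : ℕ) * (t : ℕ)) * α ^ (-(((t : ℕ) : ℤ) * ((j : ℕ) : ℤ))) =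
      (α ^ (((i : ℕ) : ℤ) - (j : ℕ))) ^ (t : ℕ) := by
    rw [← zpow_natCast α, ← zpow_add₀ (hα.ne_zero (Fin.pos t).ne'), ← zpow_natCast _ (t : ℕ),
      ← zpow_mul]
    push_cast
    ring_nf
  simp only [Matrix.mul_apply, Matrix.of_apply, hterm, Matrix.smul_apply, Matrix.one_apply,
    smul_eq_mul, mul_ite, mul_one, mul_zero]
  rw [Fin.sum_univ_eq_sum_range (fun t => (α ^ (((i : ℕ) : ℤ) - (j : ℕ))) ^ t)]
  split_ifs with hij
  · simp [hij]
  · have hne : α ^ (((i : ℕ) : ℤ) - (j : ℕ)) ≠ 1 := by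
      rw [Ne, hα.zpow_eq_one_iff_dvd]
      intro hdvd
      have := Int.eq_zero_of_abs_lt_dvd hdvd (abs_lt.mpr ⟨by omega, by omega⟩)
      exact hij (by omega)
    rw [geom_sum_eq hne, ← zpow_natCast, ← zpow_mul, mul_comm, zpow_mul, hα.zpow_eq_one, one_zpow,
      sub_self, zero_div]

theorem sum_vecMul_circulant_mul_zpow (hα : IsPrimitiveRoot α n) {k : ℕ} (u : Fin k → F)
    (ι : Fin k → Fin n) (h : Fin n → F) (e : ℤ) :
    ∑ t, Matrix.vecMul u (Matrix.of fun i t => h (t - ι i)) t * α ^ (e * ((t : ℕ) : ℤ)) =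
      (∑ q, u q * α ^ (e * ((ι q : ℕ) : ℤ))) * ∑ s, h s * α ^ (e * ((s : ℕ) : ℤ)) := by
  simp only [Matrix.vecMul, dotProduct, Matrix.of_apply, sum_mul, mul_assoc]
  rw [sum_comm]
  simp only [← mul_sum, hα.sum_sub_mul_zpow]

end IsPrimitiveRoot

open Matrix

theorem vecMul_diagonal_zpow_vecMul_idft_apply {F : Type*} [Field F] {n : ℕ} {α : F} (hα : α ≠ 0)
    (c : Fin n → F) (a : ℤ) (p : Fin n) :
    vecMul (vecMul c (diagonal fun i : Fin n => α ^ (a * ((i : ℕ) : ℤ))))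
      (of fun i j : Fin n => α ^ (-(((i : ℕ) : ℤ) * ((j : ℕ) : ℤ)))) p =
      ∑ t, c t * α ^ ((a - (p : ℕ)) * ((t : ℕ) : ℤ)) := by
  rw [vecMul, dotProduct]
  simp only [vecMul_diagonal, of_apply, mul_assoc, ← zpow_add₀ hα]
  refine sum_congr rfl fun t _ => ?_
  ring_nf

theorem stmt_10_general (F : Type*) [Field F] (n k : ℕ) (b : ℤ)
    (hkn : k < n)
    (α : F) (hα : IsPrimitiveRoot α n)
    (hchar : (n : F) = 1)
    (A : Matrix (Fin k) (Fin k) F)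
    (m : Fin k → F) (f : Fin n → F) :
    let g : Polynomial F :=
      ∏ t ∈ Finset.range (n - k), (Polynomial.X - Polynomial.C (α ^ (b + (t : ℤ))))
    let gb : Fin n → F := fun i => g.coeff i * α ^ ((b - 1) * ((i : ℕ) : ℤ))
    let G : Matrix (Fin k) (Fin n) F :=
      Matrix.of fun i t => g.coeff ((t - Fin.castLE hkn.le i : Fin n) : ℕ)
    let Ga : Matrix (Fin k) (Fin n) F := A * G
    let W : Matrix (Fin n) (Fin n) F :=
      Matrix.diagonal fun i : Fin n => α ^ ((b - 1) * ((i : ℕ) : ℤ))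
    let Fmat : Matrix (Fin n) (Fin n) F :=
      Matrix.of fun i j : Fin n => α ^ ((i : ℕ) * (j : ℕ))
    let Finv : Matrix (Fin n) (Fin n) F :=
      Matrix.of fun i j : Fin n => α ^ (-(((i : ℕ) : ℤ) * ((j : ℕ) : ℤ)))
    let D : Matrix (Fin n) (Fin n) F :=
      Matrix.diagonal fun j : Fin n => ∑ i : Fin n, gb i * α ^ (-(((i : ℕ) : ℤ) * ((j : ℕ) : ℤ)))
    let kk : ∀ _ : Matrix (Fin n) (Fin n) F, Matrix (Fin k) (Fin k) F :=
      fun M => M.submatrix (Fin.castLE hkn.le) (Fin.castLE hkn.le)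
    (∀ j : Fin n, k ≤ (j : ℕ) → f j = 0) →
    Matrix.vecMul f Fmat = Matrix.vecMul (Matrix.vecMul m Ga) W →
    (fun j : Fin k => f (Fin.castLE hkn.le j)) =
      Matrix.mulVec (kk D * kk Finv * kk W * A.transpose) m := by
  intro g gb G Ga W Fmat Finv D kk _ hfc
  have hf : f = vecMul (vecMul (vecMul m Ga) W) Finv := by
    rw [← hfc, vecMul_vecMul, hα.dft_mul_idft_s10, hchar, one_smul, vecMul_one]
  funext p
  have hα0 : α ≠ 0 := hα.ne_zero (by omega)
  have hrhs : ((kk D * kk Finv * kk W * Aᵀ) *ᵥ m) p =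
      (∑ s : Fin n, g.coeff s * α ^ ((b - 1 - (p : ℕ)) * (s : ℕ))) *
        ∑ q, (m ᵥ* A) q * α ^ ((b - 1 - (p : ℕ)) * (q : ℕ)) := by
    simp only [kk, D, Finv, W, gb, ← mulVec_mulVec, mulVec_transpose,
      submatrix_diagonal _ _ (Fin.castLE_injective hkn.le), mulVec_diagonal]
    rw [mulVec, dotProduct]
    simp only [mulVec_diagonal, submatrix_apply, of_apply, Function.comp_apply, Fin.val_castLE,
      mul_assoc, ← zpow_add₀ hα0]
    congr 1 <;> refine sum_congr rfl fun i _ => ?_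
    · ring_nf
    · rw [← mul_assoc, ← zpow_add₀ hα0]
      ring_nf
  rw [hf, vecMul_diagonal_zpow_vecMul_idft_apply hα0]
  simp only [Ga, G, ← vecMul_vecMul, Fin.val_castLE]
  rw [hα.sum_vecMul_circulant_mul_zpow _ (Fin.castLE hkn.le) (fun s => g.coeff s), hrhs, mul_comm]
  simp only [Fin.val_castLE]

/-- Reduced `k`-dimensional system: `(f_0,…,f_{k-1})ᵀ = D_{k×k}·𝐅⁻_{k×k}·W_{k×k}·Aᵀ·mᵀ`. -/
theorem stmt_10 (F : Type*) [Field F] (n k : ℕ) (b : ℤ)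
    (hn : 1 ≤ n) (hk : 1 ≤ k) (hkn : k < n)
    (α : F) (hα : IsPrimitiveRoot α n)
    (hchar : (n : F) = 1)
    (A : Matrix (Fin k) (Fin k) F) (hA : IsUnit A)
    (m : Fin k → F) (f : Fin n → F) :
    let g : Polynomial F :=
      ∏ t ∈ Finset.range (n - k), (Polynomial.X - Polynomial.C (α ^ (b + (t : ℤ))))
    let gb : Fin n → F := fun i => g.coeff i * α ^ ((b - 1) * ((i : ℕ) : ℤ))
    let G : Matrix (Fin k) (Fin n) F :=
      Matrix.of fun i t => g.coeff ((t - Fin.castLE hkn.le i : Fin n) : ℕ)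
    let Ga : Matrix (Fin k) (Fin n) F := A * G
    let W : Matrix (Fin n) (Fin n) F :=
      Matrix.diagonal fun i : Fin n => α ^ ((b - 1) * ((i : ℕ) : ℤ))
    let Fmat : Matrix (Fin n) (Fin n) F :=
      Matrix.of fun i j : Fin n => α ^ ((i : ℕ) * (j : ℕ))
    let Finv : Matrix (Fin n) (Fin n) F :=
      Matrix.of fun i j : Fin n => α ^ (-(((i : ℕ) : ℤ) * ((j : ℕ) : ℤ)))
    let D : Matrix (Fin n) (Fin n) F :=
      Matrix.diagonal fun j : Fin n => ∑ i : Fin n, gb i * α ^ (-(((i : ℕ) : ℤ) * ((j : ℕ) : ℤ)))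
    let kk : ∀ _ : Matrix (Fin n) (Fin n) F, Matrix (Fin k) (Fin k) F :=
      fun M => M.submatrix (Fin.castLE hkn.le) (Fin.castLE hkn.le)
    (∀ j : Fin n, k ≤ (j : ℕ) → f j = 0) →
    Matrix.vecMul f Fmat = Matrix.vecMul (Matrix.vecMul m Ga) W →
    (fun j : Fin k => f (Fin.castLE hkn.le j)) =
      Matrix.mulVec (kk D * kk Finv * kk W * A.transpose) m :=
  stmt_10_general F n k b hkn α hα hchar A m f
end

section
/- (Theorem 1.) Suppose the message m ∈ F^k is encoded as c = m·G_a via the generator matrix G_a, let c̄ = c·W, and let f ∈ F^n be the preimage of c̄ under the evaluation map, i.e., f_j = 0 for all k ≤ j ≤ n−1 and f·𝐅 = c̄. Then the matrices A^T, W_{k×k}, 𝐅⁻_{k×k} and D_{k×k} are all invertible and m^T = (A^T)⁻¹ · (W_{k×k})⁻¹ · (𝐅⁻_{k×k})⁻¹ · (D_{k×k})⁻¹ · (f_0, f_1, …, f_{k−1})^T, where M_{k×k} denotes the upper-left k×k submatrix of an n×n matrix M. Thus m is recovered from the list element (f_0,…,f_{k−1}) by a single k×k matrix–vector multiplication. 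-/
open Matrix Polynomial Finset

private lemma prim_ne_zero {F : Type*} [Field F] {n : ℕ} (hn : 1 ≤ n) {α : F}
    (hα : IsPrimitiveRoot α n) : α ≠ 0 := by
  intro h
  have h1 := hα.pow_eq_one
  rw [h, zero_pow (by omega)] at h1
  exact zero_ne_one h1

private lemma zpw {F : Type*} [Field F] {n : ℕ} {α : F} (hα : IsPrimitiveRoot α n)
    (hα0 : α ≠ 0) {x y : ℤ} (h : (n:ℤ) ∣ x - y) : α ^ x = α ^ y := by
  have h1 : α ^ (x - y) = 1 := (hα.zpow_eq_one_iff_dvd _).2 h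
  calc α ^ x = α ^ (x - y) * α ^ y := by rw [← zpow_add₀ hα0]; ring_nf
  _ = α ^ y := by rw [h1, one_mul]

private lemma FmatFinv {F : Type*} [Field F] {n : ℕ} (hn : 1 ≤ n) {α : F}
    (hα : IsPrimitiveRoot α n) (hchar : (n:F) = 1) :
    (Matrix.of fun i j : Fin n => α ^ ((i:ℕ)*(j:ℕ))) *
    (Matrix.of fun i j : Fin n => α ^ (-(((i:ℕ):ℤ)*((j:ℕ):ℤ)))) = 1 := by
  have hα0 : α ≠ 0 := prim_ne_zero hn hα
  ext i j
  simp only [Matrix.mul_apply, Matrix.of_apply, Matrix.one_apply]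
  set β : F := α ^ (((i:ℕ):ℤ) - ((j:ℕ):ℤ)) with hβ
  have hterm : ∀ t : Fin n, α ^ ((i:ℕ)*(t:ℕ)) * α ^ (-(((t:ℕ):ℤ)*((j:ℕ):ℤ))) = β ^ (t:ℕ) := by
    intro t
    rw [hβ, ← zpow_natCast α ((i:ℕ)*(t:ℕ)), ← zpow_add₀ hα0, ← zpow_natCast _ (t:ℕ), ← _root_.zpow_mul]
    congr 1; push_cast; ring
  rw [Finset.sum_congr rfl (fun t _ => hterm t)]
  by_cases h : i = j
  · subst h
    rw [if_pos rfl]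
    simp [hβ, sub_self, hchar]
  · rw [if_neg h]
    have hβn : β ^ n = 1 := by
      rw [hβ, ← zpow_natCast, ← _root_.zpow_mul]
      exact (hα.zpow_eq_one_iff_dvd _).2 ⟨(i:ℤ) - (j:ℤ), by ring⟩
    have hβ1 : β ≠ 1 := by
      intro h1
      have hd : (n:ℤ) ∣ ((i:ℕ):ℤ) - ((j:ℕ):ℤ) := (hα.zpow_eq_one_iff_dvd _).1 h1
      have hne : ((i:ℕ):ℤ) - ((j:ℕ):ℤ) ≠ 0 := by
        intro h0; apply h; apply Fin.ext; omega
      have := Int.le_of_dvd (abs_pos.2 hne) ((dvd_abs _ _).2 hd)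
      have hi := i.isLt; have hj := j.isLt
      rw [le_abs] at this
      omega
    rw [Fin.sum_univ_eq_sum_range (fun t => β ^ t) n, geom_sum_eq hβ1, hβn, sub_self, zero_div]
/-- Theorem 1: `Aᵀ`, `W_{k×k}`, `𝐅⁻_{k×k}`, `D_{k×k}` are invertible and the
message is recovered as
`mᵀ = (Aᵀ)⁻¹·(W_{k×k})⁻¹·(𝐅⁻_{k×k})⁻¹·(D_{k×k})⁻¹·(f_0,…,f_{k-1})ᵀ`. -/
theorem stmt_11 (F : Type*) [Field F] (n k : ℕ) (b : ℤ)
    (hn : 1 ≤ n) (hk : 1 ≤ k) (hkn : k < n)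
    (α : F) (hα : IsPrimitiveRoot α n)
    (hchar : (n : F) = 1)
    (A : Matrix (Fin k) (Fin k) F) (hA : IsUnit A)
    (m : Fin k → F) (f : Fin n → F) :
    let g : Polynomial F :=
      ∏ t ∈ Finset.range (n - k), (Polynomial.X - Polynomial.C (α ^ (b + (t : ℤ))))
    let gb : Fin n → F := fun i => g.coeff i * α ^ ((b - 1) * ((i : ℕ) : ℤ))
    let G : Matrix (Fin k) (Fin n) F :=
      Matrix.of fun i t => g.coeff ((t - Fin.castLE hkn.le i : Fin n) : ℕ)
    let Ga : Matrix (Fin k) (Fin n) F := A * G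
    let W : Matrix (Fin n) (Fin n) F :=
      Matrix.diagonal fun i : Fin n => α ^ ((b - 1) * ((i : ℕ) : ℤ))
    let Fmat : Matrix (Fin n) (Fin n) F :=
      Matrix.of fun i j : Fin n => α ^ ((i : ℕ) * (j : ℕ))
    let Finv : Matrix (Fin n) (Fin n) F :=
      Matrix.of fun i j : Fin n => α ^ (-(((i : ℕ) : ℤ) * ((j : ℕ) : ℤ)))
    let D : Matrix (Fin n) (Fin n) F :=
      Matrix.diagonal fun j : Fin n => ∑ i : Fin n, gb i * α ^ (-(((i : ℕ) : ℤ) * ((j : ℕ) : ℤ)))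
    let kk : ∀ _ : Matrix (Fin n) (Fin n) F, Matrix (Fin k) (Fin k) F :=
      fun M => M.submatrix (Fin.castLE hkn.le) (Fin.castLE hkn.le)
    (∀ j : Fin n, k ≤ (j : ℕ) → f j = 0) →
    Matrix.vecMul f Fmat = Matrix.vecMul (Matrix.vecMul m Ga) W →
    (IsUnit A.transpose ∧ IsUnit (kk W) ∧ IsUnit (kk Finv) ∧ IsUnit (kk D)) ∧
      m = Matrix.mulVec (A.transpose⁻¹ * (kk W)⁻¹ * (kk Finv)⁻¹ * (kk D)⁻¹)
            (fun j : Fin k => f (Fin.castLE hkn.le j)) := by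
  intro g gb G Ga W Fmat Finv D kk hf0 hF
  have hα0 : α ≠ 0 := prim_ne_zero hn hα
  have : NeZero n := ⟨by omega⟩
  set Dd : Fin n → F :=
    fun j => ∑ i : Fin n, gb i * α ^ (-(((i : ℕ) : ℤ) * ((j : ℕ) : ℤ))) with hDd
  -- degree of g
  have hgdeg : g.natDegree = n - k := by
    show (∏ t ∈ Finset.range (n - k),
      (Polynomial.X - Polynomial.C (α ^ (b + (t : ℤ))))).natDegree = n - k
    rw [Polynomial.natDegree_prod _ _ (fun t _ => Polynomial.X_sub_C_ne_zero _)]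
    simp [Polynomial.natDegree_X_sub_C]
  -- evaluation formula
  have hsum : ∀ c : ℤ, ∑ i : Fin n, g.coeff i * α ^ (c * ((i : ℕ) : ℤ)) = g.eval (α ^ c) := by
    intro c
    rw [Polynomial.eval_eq_sum_range' (show g.natDegree < n by omega),
      ← Fin.sum_univ_eq_sum_range (fun s => g.coeff s * (α ^ c) ^ s) n]
    refine Finset.sum_congr rfl fun i _ => ?_
    rw [_root_.zpow_mul, zpow_natCast]
  -- D's diagonal entries
  have hDeval : ∀ j : Fin n, Dd j = g.eval (α ^ (b - 1 - ((j : ℕ) : ℤ))) := by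
    intro j
    rw [hDd, ← hsum (b - 1 - ((j : ℕ) : ℤ))]
    refine Finset.sum_congr rfl fun i _ => ?_
    show g.coeff i * α ^ ((b - 1) * ((i : ℕ) : ℤ)) * α ^ (-(((i : ℕ) : ℤ) * ((j : ℕ) : ℤ))) = _
    rw [mul_assoc, ← zpow_add₀ hα0]
    congr 2
    ring
  -- nonvanishing of D on the first k entries
  have hDne : ∀ j : Fin n, (j : ℕ) < k → Dd j ≠ 0 := by
    intro j hj
    rw [hDeval, Polynomial.eval_prod]
    rw [Finset.prod_ne_zero_iff]
    intro t ht
    rw [Finset.mem_range] at ht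
    rw [Polynomial.eval_sub, Polynomial.eval_X, Polynomial.eval_C]
    intro hzero
    have heq : α ^ (b - 1 - ((j : ℕ) : ℤ)) = α ^ (b + (t : ℤ)) := by
      have := sub_eq_zero.mp hzero; exact this
    have h1 : α ^ ((b + (t : ℤ)) - (b - 1 - ((j : ℕ) : ℤ))) = 1 := by
      rw [zpow_sub₀ hα0, heq, div_self (zpow_ne_zero _ hα0)]
    have hd : (n : ℤ) ∣ (b + (t : ℤ)) - (b - 1 - ((j : ℕ) : ℤ)) :=
      (hα.zpow_eq_one_iff_dvd _).1 h1
    have he : (b + (t : ℤ)) - (b - 1 - ((j : ℕ) : ℤ)) = 1 + t + (j : ℕ) := by ring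
    rw [he] at hd
    have hpos : (0 : ℤ) < 1 + t + (j : ℕ) := by positivity
    have := Int.le_of_dvd hpos hd
    omega
  -- f in terms of D
  have horth : Fmat * Finv = 1 := FmatFinv hn hα hchar
  have hf : f = Matrix.vecMul (Matrix.vecMul (Matrix.vecMul m Ga) W) Finv := by
    rw [← hF, Matrix.vecMul_vecMul, horth, Matrix.vecMul_one]
  set m' : Fin k → F := Matrix.vecMul m A with hm'
  have key : ∀ j : Fin n,
      f j = Dd j * ∑ i : Fin k, m' i * α ^ ((b - 1 - ((j : ℕ) : ℤ)) * ((i : ℕ) : ℤ)) := by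
    intro j
    set c : ℤ := b - 1 - ((j : ℕ) : ℤ) with hc
    have hmod : ∀ s t : Fin n, α ^ (c * (((s + t : Fin n) : ℕ) : ℤ)) =
        α ^ (c * ((s : ℕ) : ℤ)) * α ^ (c * ((t : ℕ) : ℤ)) := by
      intro s t
      rw [← zpow_add₀ hα0]
      refine zpw hα hα0 ?_
      have hv : ((s + t : Fin n) : ℕ) = ((s : ℕ) + (t : ℕ)) % n := Fin.val_add s t
      have hd : (n : ℤ) ∣ ((((s : ℕ) + (t : ℕ) : ℕ)) : ℤ) - (((s + t : Fin n) : ℕ) : ℤ) := by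
        rw [hv]; exact_mod_cast (Nat.mod_modEq ((s : ℕ) + (t : ℕ)) n).dvd
      obtain ⟨d, hd⟩ := hd
      have hd' : (((s : ℕ) : ℤ) + ((t : ℕ) : ℤ)) - (((s + t : Fin n) : ℕ) : ℤ) = n * d := by
        push_cast at hd ⊢; linarith
      exact ⟨-(c * d), by linear_combination (-c) * hd'⟩
    have e1 : f j = ∑ t : Fin n, (∑ i : Fin k, m' i * G i t) * α ^ (c * ((t : ℕ) : ℤ)) := by
      rw [hf]
      have hGa : Matrix.vecMul m Ga = Matrix.vecMul m' G := by
        rw [hm', Matrix.vecMul_vecMul]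
      rw [hGa]
      show ∑ t : Fin n, (Matrix.vecMul (Matrix.vecMul m' G) W) t * Finv t j = _
      refine Finset.sum_congr rfl fun t _ => ?_
      have hW : (Matrix.vecMul (Matrix.vecMul m' G) W) t =
          (Matrix.vecMul m' G) t * α ^ ((b - 1) * ((t : ℕ) : ℤ)) :=
        Matrix.vecMul_diagonal _ _ t
      rw [hW]
      show (Matrix.vecMul m' G) t * α ^ ((b - 1) * ((t : ℕ) : ℤ)) *
        α ^ (-(((t : ℕ) : ℤ) * ((j : ℕ) : ℤ))) = _
      rw [mul_assoc, ← zpow_add₀ hα0]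
      congr 2
      rw [hc]; ring
    have e3 : ∀ i' : Fin n, ∑ t : Fin n, g.coeff (((t - i' : Fin n) : ℕ)) * α ^ (c * ((t : ℕ) : ℤ))
        = α ^ (c * ((i' : ℕ) : ℤ)) * Dd j := by
      intro i'
      rw [← Equiv.sum_comp (Equiv.addRight i')
        (fun t : Fin n => g.coeff (((t - i' : Fin n) : ℕ)) * α ^ (c * ((t : ℕ) : ℤ)))]
      simp only [Equiv.coe_addRight]
      have hDj : Dd j = ∑ s : Fin n, g.coeff s * α ^ (c * ((s : ℕ) : ℤ)) := by
        rw [hDeval, hc, ← hsum (b - 1 - ((j : ℕ) : ℤ))]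
      rw [hDj, Finset.mul_sum]
      refine Finset.sum_congr rfl fun s _ => ?_
      rw [add_sub_cancel_right, hmod s i']
      ring
    rw [e1]
    have e2 : ∑ t : Fin n, (∑ i : Fin k, m' i * G i t) * α ^ (c * ((t : ℕ) : ℤ)) =
        ∑ i : Fin k, m' i * ∑ t : Fin n,
          g.coeff (((t - Fin.castLE hkn.le i : Fin n) : ℕ)) * α ^ (c * ((t : ℕ) : ℤ)) := by
      simp only [Finset.sum_mul]
      rw [Finset.sum_comm]
      refine Finset.sum_congr rfl fun i _ => ?_
      rw [Finset.mul_sum]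
      refine Finset.sum_congr rfl fun t _ => ?_
      show m' i * g.coeff (((t - Fin.castLE hkn.le i : Fin n) : ℕ)) * α ^ (c * ((t : ℕ) : ℤ)) = _
      ring
    rw [e2, Finset.mul_sum]
    refine Finset.sum_congr rfl fun i _ => ?_
    rw [e3 (Fin.castLE hkn.le i)]
    simp only [Fin.coe_castLE]
    ring
  -- kk of diagonal matrices
  have hkkW : kk W = Matrix.diagonal fun i : Fin k => α ^ ((b - 1) * ((i : ℕ) : ℤ)) := by
    ext i j
    by_cases h : i = j
    · subst h; simp [kk, W, Matrix.diagonal_apply_eq]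
    · have : Fin.castLE hkn.le i ≠ Fin.castLE hkn.le j := fun hc => h (Fin.castLE_inj.mp hc)
      simp [kk, W, Matrix.diagonal_apply_ne _ h, Matrix.diagonal_apply_ne _ this]
      
  have hkkD : kk D = Matrix.diagonal fun j : Fin k => Dd (Fin.castLE hkn.le j) := by
    ext i j
    by_cases h : i = j
    · subst h; simp [kk, D, Dd, Matrix.diagonal_apply_eq]
    · have : Fin.castLE hkn.le i ≠ Fin.castLE hkn.le j := fun hc => h (Fin.castLE_inj.mp hc)
      simp [kk, D, Matrix.diagonal_apply_ne _ h, Matrix.diagonal_apply_ne _ this]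
  -- invertibility
  have hAT : IsUnit A.transpose := by
    rw [Matrix.isUnit_iff_isUnit_det, Matrix.det_transpose, ← Matrix.isUnit_iff_isUnit_det]
    exact hA
  have hWu : IsUnit (kk W) := by
    rw [hkkW, Matrix.isUnit_iff_isUnit_det, Matrix.det_diagonal]
    refine IsUnit.of_mul_eq_one (∏ i : Fin k, (α ^ ((b - 1) * ((i : ℕ) : ℤ)))⁻¹) ?_
    rw [← Finset.prod_mul_distrib]
    exact Finset.prod_eq_one fun i _ => mul_inv_cancel₀ (zpow_ne_zero _ hα0)
  have hFu : IsUnit (kk Finv) := by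
    have hv : kk Finv = Matrix.vandermonde fun i : Fin k => α ^ (-((i : ℕ) : ℤ)) := by
      ext i j
      show α ^ (-((((Fin.castLE hkn.le i : Fin n) : ℕ) : ℤ) *
        (((Fin.castLE hkn.le j : Fin n) : ℕ) : ℤ))) = _
      rw [Matrix.vandermonde_apply, ← zpow_natCast (α ^ (-((i : ℕ) : ℤ))) (j : ℕ),
        ← _root_.zpow_mul]
      congr 1
      simp only [Fin.coe_castLE]
      ring
    rw [hv, Matrix.isUnit_iff_isUnit_det]
    refine isUnit_iff_ne_zero.mpr (Matrix.det_vandermonde_ne_zero_iff.2 ?_)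
    intro i j hij
    have h1 : (α ^ ((i : ℕ)))⁻¹ = (α ^ ((j : ℕ)))⁻¹ := by
      rw [← zpow_natCast α, ← zpow_natCast α, ← _root_.zpow_neg, ← _root_.zpow_neg]; exact hij
    exact Fin.ext (hα.pow_inj (lt_trans i.isLt hkn) (lt_trans j.isLt hkn) (inv_injective h1))
  have hDu : IsUnit (kk D) := by
    rw [hkkD, Matrix.isUnit_iff_isUnit_det, Matrix.det_diagonal]
    refine IsUnit.of_mul_eq_one (∏ i : Fin k, (Dd (Fin.castLE hkn.le i))⁻¹) ?_
    rw [← Finset.prod_mul_distrib]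
    refine Finset.prod_eq_one fun i _ => ?_
    exact mul_inv_cancel₀ (hDne _ (by simp))
  -- the k×k system
  have hsys : (fun j : Fin k => f (Fin.castLE hkn.le j)) =
      Matrix.mulVec (kk D * kk Finv * kk W * A.transpose) m := by
    funext j
    rw [key (Fin.castLE hkn.le j)]
    rw [← Matrix.mulVec_mulVec, ← Matrix.mulVec_mulVec, ← Matrix.mulVec_mulVec,
      Matrix.mulVec_transpose, ← hm', hkkD, Matrix.mulVec_diagonal]
    have hu : (kk W).mulVec m' = fun i : Fin k => α ^ ((b - 1) * ((i : ℕ) : ℤ)) * m' i := by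
      funext i; rw [hkkW, Matrix.mulVec_diagonal]
    rw [hu]
    congr 1
    show _ = ∑ i : Fin k, Finv (Fin.castLE hkn.le j) (Fin.castLE hkn.le i) *
      (α ^ ((b - 1) * ((i : ℕ) : ℤ)) * m' i)
    refine Finset.sum_congr rfl fun i _ => ?_
    show m' i * α ^ ((b - 1 - (((Fin.castLE hkn.le j : Fin n) : ℕ) : ℤ)) * ((i : ℕ) : ℤ)) =
      α ^ (-((((Fin.castLE hkn.le j : Fin n) : ℕ) : ℤ) * (((Fin.castLE hkn.le i : Fin n) : ℕ) : ℤ)))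
        * (α ^ ((b - 1) * ((i : ℕ) : ℤ)) * m' i)
    rw [← mul_assoc, ← zpow_add₀ hα0, mul_comm]
    congr 2
    simp only [Fin.coe_castLE]
    ring
  refine ⟨⟨hAT, hWu, hFu, hDu⟩, ?_⟩
  have hMu : IsUnit (kk D * kk Finv * kk W * A.transpose) := ((hDu.mul hFu).mul hWu).mul hAT
  have hinv : (kk D * kk Finv * kk W * A.transpose)⁻¹ =
      A.transpose⁻¹ * (kk W)⁻¹ * (kk Finv)⁻¹ * (kk D)⁻¹ := by
    rw [Matrix.mul_inv_rev, Matrix.mul_inv_rev, Matrix.mul_inv_rev,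
      ← mul_assoc, ← mul_assoc]
  rw [hsys, ← hinv, Matrix.mulVec_mulVec,
    Matrix.nonsing_inv_mul _ ((Matrix.isUnit_iff_isUnit_det _).1 hMu), Matrix.one_mulVec]
end
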